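/- arXiv:2002.10338 — 3 statements merged into one kernel-verified Lean document; each statement's English description precedes it below -/
import Mathlib

section
/- Let W > 0 and M > 0 be real numbers. Every point (u, g) ∈ ℝ² with g·|g| = W·u and −M ≤ g ≤ M satisfies (W/(2·M))·u − M/2 ≤ g ≤ (W/(2·M))·u + M/2. (Validity of the linear ECH constraints (18b)–(18c), given by the tangent lines to the Weymouth curve at its two endpoints, for every point satisfying the bidirectional Weymouth equation.) -/
/-! After multiplying by `2M` and replacing `W u` by `g|g|`, the two constraints say that the
odd function `g ↦ g|g|` lies above its tangent `2Mg - M²` at `M` and below its tangent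
`2Mg + M²` at `-M`. The first holds on `[-M, ∞)`: for `g ≥ 0` the gap is `(g - M)²`, and for
`-M ≤ g < 0` it is `M² - g² - 2Mg ≥ 0`. The second is the first applied to `-g`. -/

theorem two_mul_mul_sub_sq_le_mul_abs {M g : ℝ} (hg : -M ≤ g) :
    2 * M * g - M ^ 2 ≤ g * |g| := by
  rcases le_or_gt 0 g with hg0 | hg0
  · rw [abs_of_nonneg hg0]
    nlinarith [sq_nonneg (g - M)]
  · rw [abs_of_neg hg0]
    nlinarith

theorem mul_abs_le_two_mul_mul_add_sq {M g : ℝ} (hg : g ≤ M) :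
    g * |g| ≤ 2 * M * g + M ^ 2 := by
  have h := two_mul_mul_sub_sq_le_mul_abs (neg_le_neg hg)
  rw [abs_neg] at h
  linarith

theorem ech_linear_constraints_valid_general (W M : ℝ) (hM : 0 < M) :
    ∀ u g : ℝ, g * |g| = W * u → -M ≤ g → g ≤ M →
      (W / (2 * M)) * u - M / 2 ≤ g ∧ g ≤ (W / (2 * M)) * u + M / 2 := by
  intro u g hgu hMg hgM
  have hu : W / (2 * M) * u = g * |g| / (2 * M) := by rw [hgu, div_mul_eq_mul_div]
  have h2M : 0 < 2 * M := by positivity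
  have lower := two_mul_mul_sub_sq_le_mul_abs hMg
  have upper := mul_abs_le_two_mul_mul_add_sq hgM
  rw [hu]
  constructor
  · rw [sub_le_iff_le_add, div_le_iff₀ h2M]
    nlinarith
  · rw [← sub_le_iff_le_add, le_div_iff₀ h2M]
    nlinarith

/-- Validity of the linear ECH constraints (18b)-(18c) for every point of the
bidirectional Weymouth set. -/
theorem ech_linear_constraints_valid (W M : ℝ) (hW : 0 < W) (hM : 0 < M) :
    ∀ u g : ℝ, g * |g| = W * u → -M ≤ g → g ≤ M →
      (W / (2 * M)) * u - M / 2 ≤ g ∧ g ≤ (W / (2 * M)) * u + M / 2 :=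
  ech_linear_constraints_valid_general W M hM
end

section
/- Let W > 0 and M > 0 be real numbers, let S = {(u, g) ∈ ℝ² : g·|g| = W·u ∧ −M ≤ g ≤ M}, and let E = {(u, g) ∈ ℝ² : −M ≤ g ≤ M ∧ (W/(2·M))·u − M/2 ≤ g ∧ g ≤ (W/(2·M))·u + M/2}. Then E is a convex set and the convex hull of S is contained in E. (The ECH of the bidirectional Weymouth equation is convex and contains the convex hull of the Weymouth set.) -/
/-! The region is cut out by four linear inequalities, hence convex, so it suffices that it contains
the Weymouth set. On that set `(W / (2 * M)) * u = g * |g| / (2 * M)`, and the distance from `g` to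
this value is `|g| * (2 * M - |g|) / (2 * M)`, which is at most `M / 2` by AM–GM. -/

open Set

lemma convex_setOf_band_inter_slab (k c M : ℝ) :
    Convex ℝ {p : ℝ × ℝ | -M ≤ p.2 ∧ p.2 ≤ M ∧ k * p.1 - c ≤ p.2 ∧ p.2 ≤ k * p.1 + c} := by
  have hslab : Convex ℝ (LinearMap.snd ℝ ℝ ℝ ⁻¹' Icc (-M) M) :=
    (convex_Icc _ _).linear_preimage _
  have hband : Convex ℝ ((LinearMap.snd ℝ ℝ ℝ - k • LinearMap.fst ℝ ℝ ℝ) ⁻¹' Icc (-c) c) :=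
    (convex_Icc _ _).linear_preimage _
  convert hslab.inter hband using 1
  ext p
  simp only [mem_ofPred_eq, mem_inter_iff, mem_preimage, mem_Icc, LinearMap.sub_apply,
    LinearMap.smul_apply, LinearMap.snd_apply, LinearMap.fst_apply, smul_eq_mul]
  constructor
  · rintro ⟨h₁, h₂, h₃, h₄⟩
    exact ⟨⟨h₁, h₂⟩, by linarith, by linarith⟩
  · rintro ⟨⟨h₁, h₂⟩, h₃, h₄⟩
    exact ⟨h₁, h₂, by linarith, by linarith⟩

lemma abs_sub_mul_abs_div_le_half {M g : ℝ} (hM : 0 < M) (hg : |g| ≤ 2 * M) :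
    |g - g * |g| / (2 * M)| ≤ M / 2 := by
  have hdist : |g - g * |g| / (2 * M)| = |g| * (2 * M - |g|) / (2 * M) := by
    rw [show g - g * |g| / (2 * M) = g * (2 * M - |g|) / (2 * M) by field_simp, abs_div,
      abs_mul, abs_of_nonneg (sub_nonneg.mpr hg), abs_of_pos (by linarith : (0 : ℝ) < 2 * M)]
  rw [hdist, div_le_iff₀ (by linarith)]
  nlinarith [sq_nonneg (M - |g|)]

theorem ech_is_convex_and_contains_convex_hull_general (W M : ℝ) (hM : 0 < M) :
    Convex ℝ {p : ℝ × ℝ | -M ≤ p.2 ∧ p.2 ≤ M ∧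
        (W / (2 * M)) * p.1 - M / 2 ≤ p.2 ∧ p.2 ≤ (W / (2 * M)) * p.1 + M / 2} ∧
      convexHull ℝ {p : ℝ × ℝ | p.2 * |p.2| = W * p.1 ∧ -M ≤ p.2 ∧ p.2 ≤ M} ⊆
        {p : ℝ × ℝ | -M ≤ p.2 ∧ p.2 ≤ M ∧
          (W / (2 * M)) * p.1 - M / 2 ≤ p.2 ∧ p.2 ≤ (W / (2 * M)) * p.1 + M / 2} := by
  have hconv := convex_setOf_band_inter_slab (W / (2 * M)) (M / 2) M
  refine ⟨hconv, convexHull_min ?_ hconv⟩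
  rintro ⟨u, g⟩ ⟨hweymouth, hgl, hgu⟩
  have hu : W / (2 * M) * u = g * |g| / (2 * M) := by
    rw [div_mul_eq_mul_div, hweymouth]
  have hg : |g| ≤ 2 * M := abs_le.mpr ⟨by linarith, by linarith⟩
  obtain ⟨hlow, hupp⟩ := abs_le.mp (abs_sub_mul_abs_div_le_half hM hg)
  refine ⟨hgl, hgu, ?_, ?_⟩ <;> simp only [hu] <;> linarith

/-- The ECH of the bidirectional Weymouth equation is convex and contains
the convex hull of the Weymouth set. -/
theorem ech_is_convex_and_contains_convex_hull (W M : ℝ) (hW : 0 < W) (hM : 0 < M) :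
    Convex ℝ {p : ℝ × ℝ | -M ≤ p.2 ∧ p.2 ≤ M ∧
        (W / (2 * M)) * p.1 - M / 2 ≤ p.2 ∧ p.2 ≤ (W / (2 * M)) * p.1 + M / 2} ∧
      convexHull ℝ {p : ℝ × ℝ | p.2 * |p.2| = W * p.1 ∧ -M ≤ p.2 ∧ p.2 ≤ M} ⊆
        {p : ℝ × ℝ | -M ≤ p.2 ∧ p.2 ≤ M ∧
          (W / (2 * M)) * p.1 - M / 2 ≤ p.2 ∧ p.2 ≤ (W / (2 * M)) * p.1 + M / 2} :=
  ech_is_convex_and_contains_convex_hull_general W M hM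
end

section
/- Let W > 0 and let a, b be real numbers with 0 ≤ a < b. Then the convex hull (over ℝ) of the set {(u, g) ∈ ℝ² : g² = W·u ∧ a ≤ g ≤ b} equals the set {(u, g) ∈ ℝ² : g² ≤ W·u ∧ W·u ≤ (a + b)·g − a·b}. (For the unidirectional Weymouth equation, the ECH described by constraints (19a)–(19b) coincides with the convex hull of the Weymouth set.) -/
/-!
The Weymouth set is the graph `u = g² / W` of a convex function over `g ∈ [a, b]` (with the
coordinates swapped), and the region `g² ≤ W u ≤ (a + b) g - a b` lies between that graph and its
chord over `[a, b]`. The region is convex and contains the graph, so it contains the hull.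
Conversely, a point `(u, g)` of the region lies on the horizontal segment from the graph point
`(g² / W, g)` to the chord point at height `g`, and the chord point lies on the segment joining the
two endpoints of the graph.
-/

open Set

theorem mk_mem_convexHull_image_Icc {f : ℝ → ℝ} {a b x y : ℝ} (hab : a < b) (hx : x ∈ Icc a b)
    (hfy : f x ≤ y) (hy : y ≤ f a + (x - a) / (b - a) * (f b - f a)) :
    (y, x) ∈ convexHull ℝ ((fun t => (f t, t)) '' Icc a b) := by
  set t := (x - a) / (b - a)
  have ht : t ∈ Icc (0 : ℝ) 1 :=
    ⟨div_nonneg (sub_nonneg.2 hx.1) (sub_pos.2 hab).le,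
      (div_le_one (sub_pos.2 hab)).2 (by linarith [hx.2])⟩
  have hchord : AffineMap.lineMap (f a, a) (f b, b) t = (f a + t * (f b - f a), x) := by
    simp only [AffineMap.lineMap_apply_module', Prod.smul_mk, Prod.mk_add_mk, Prod.mk_sub_mk,
      smul_eq_mul, t]
    rw [div_mul_cancel₀ _ (sub_pos.2 hab).ne', sub_add_cancel, add_comm]
  have hchord_mem : (f a + t * (f b - f a), x) ∈ convexHull ℝ ((fun t => (f t, t)) '' Icc a b) :=
    hchord ▸ segment_subset_convexHull (mem_image_of_mem _ (left_mem_Icc.2 hab.le))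
      (mem_image_of_mem _ (right_mem_Icc.2 hab.le)) (lineMap_mem_segment ℝ _ _ ht)
  have hgraph_mem := subset_convexHull ℝ _ (mem_image_of_mem (fun t => (f t, t)) hx)
  refine (convex_convexHull ℝ _).segment_subset hgraph_mem hchord_mem ?_
  rw [← Prod.image_mk_segment_left]
  exact mem_image_of_mem _ (Icc_subset_segment ⟨hfy, hy⟩)

def weymouthSet (W a b : ℝ) : Set (ℝ × ℝ) :=
  {p | p.2 ^ 2 = W * p.1 ∧ a ≤ p.2 ∧ p.2 ≤ b}

-- The constraints (19a)-(19b) of the paper.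
def weymouthECH (W a b : ℝ) : Set (ℝ × ℝ) :=
  {p | p.2 ^ 2 ≤ W * p.1 ∧ W * p.1 ≤ (a + b) * p.2 - a * b}

section Weymouth

variable {W a b : ℝ}

theorem weymouthSet_eq_image (hW : W ≠ 0) :
    weymouthSet W a b = (fun g => (g ^ 2 / W, g)) '' Icc a b := by
  ext ⟨u, g⟩
  simp only [weymouthSet, mem_ofPred_eq, mem_image, mem_Icc, Prod.mk.injEq]
  constructor
  · rintro ⟨hug, hag, hgb⟩
    exact ⟨g, ⟨hag, hgb⟩, by rw [hug, mul_div_cancel_left₀ _ hW], rfl⟩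
  · rintro ⟨g, hg, rfl, rfl⟩
    exact ⟨by rw [mul_div_cancel₀ _ hW], hg⟩

theorem weymouthSet_subset_weymouthECH : weymouthSet W a b ⊆ weymouthECH W a b := by
  rintro ⟨u, g⟩ ⟨hug, hag, hgb⟩
  have hgap : 0 ≤ (g - a) * (b - g) := mul_nonneg (sub_nonneg.2 hag) (sub_nonneg.2 hgb)
  exact ⟨hug.le, by linarith⟩

theorem convex_weymouthECH (W a b : ℝ) : Convex ℝ (weymouthECH W a b) := by
  have hparabola : ConvexOn ℝ univ fun p : ℝ × ℝ => p.2 ^ 2 - W * p.1 :=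
    ((Even.convexOn_pow (𝕜 := ℝ) even_two).comp_linearMap (LinearMap.snd ℝ ℝ ℝ)).sub
      ((W • LinearMap.fst ℝ ℝ ℝ : ℝ × ℝ →ₗ[ℝ] ℝ).concaveOn convex_univ)
  have hchord := convex_halfSpace_le
    (W • LinearMap.fst ℝ ℝ ℝ - (a + b) • LinearMap.snd ℝ ℝ ℝ : ℝ × ℝ →ₗ[ℝ] ℝ).isLinear (-(a * b))
  convert (hparabola.convex_le 0).inter hchord using 1
  ext p
  simp only [weymouthECH, mem_ofPred_eq, mem_inter_iff, mem_univ, true_and, sub_nonpos,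
    LinearMap.sub_apply, LinearMap.smul_apply, LinearMap.fst_apply, LinearMap.snd_apply,
    smul_eq_mul]
  exact and_congr_right' ⟨fun h => by linarith, fun h => by linarith⟩

theorem weymouthECH_subset_convexHull (hW : 0 < W) (hab : a < b) :
    weymouthECH W a b ⊆ convexHull ℝ (weymouthSet W a b) := by
  rintro ⟨u, g⟩ ⟨hlow, hup⟩
  have hg : g ∈ Icc a b := by
    have hgap : (g - a) * (g - b) ≤ 0 := by linarith
    constructor <;> nlinarith
  rw [weymouthSet_eq_image hW.ne']
  refine mk_mem_convexHull_image_Icc hab hg ((div_le_iff₀' hW).2 hlow) ?_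
  have hchord : a ^ 2 / W + (g - a) / (b - a) * (b ^ 2 / W - a ^ 2 / W)
      = ((a + b) * g - a * b) / W := by
    field_simp [(sub_pos.2 hab).ne']
    ring
  rw [hchord]
  exact (le_div_iff₀' hW).2 hup

end Weymouth

theorem ech_eq_convex_hull_unidirectional_general (W a b : ℝ) (hW : 0 < W)
    (hab : a < b) :
    convexHull ℝ {p : ℝ × ℝ | p.2 ^ 2 = W * p.1 ∧ a ≤ p.2 ∧ p.2 ≤ b} =
      {p : ℝ × ℝ | p.2 ^ 2 ≤ W * p.1 ∧ W * p.1 ≤ (a + b) * p.2 - a * b} :=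
  (convexHull_min weymouthSet_subset_weymouthECH (convex_weymouthECH W a b)).antisymm
    (weymouthECH_subset_convexHull hW hab)

/-- For the unidirectional Weymouth equation, the ECH described by constraints
(19a)-(19b) coincides with the convex hull of the Weymouth set. -/
theorem ech_eq_convex_hull_unidirectional (W a b : ℝ) (hW : 0 < W)
    (ha : 0 ≤ a) (hab : a < b) :
    convexHull ℝ {p : ℝ × ℝ | p.2 ^ 2 = W * p.1 ∧ a ≤ p.2 ∧ p.2 ≤ b} =
      {p : ℝ × ℝ | p.2 ^ 2 ≤ W * p.1 ∧ W * p.1 ≤ (a + b) * p.2 - a * b} :=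
  ech_eq_convex_hull_unidirectional_general W a b hW hab
end
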